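/- arXiv:1909.06890 — 3 statements merged into one kernel-verified Lean document; each statement's English description precedes it below -/
import Mathlib

section
/- In a two-player zero-sum-like game where the defender chooses 'direct' with probability p and 'indirect' with probability 1−p, and payoffs to the defender are: U(direct vs attacker-direct) = −H − 1, U(direct vs attacker-indirect) = −1, U(indirect vs attacker-direct) = −H(k−1)/(n−2) − 2, U(indirect vs attacker-indirect) = −H·k/(n−2) − 2, the defender's probability p = 1/(n−1) makes the attacker indifferent between his two pure strategies, assuming H > 0 and n ≥ 3. -/
/-! Against the defender's mix `(p, 1 - p)` the attacker's gain from `direct` over `indirect`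
is `H (p - (1 - p) / (n - 2))`, and `p (n - 2) = 1 - p` holds for `p = 1 / (n - 1)`. -/

theorem attacker_payoff_direct_sub_indirect (H c p k m : ℝ) :
    (p * (H - c) + (1 - p) * (H * (k - 1) / m - c)) -
        (p * (-c) + (1 - p) * (H * k / m - c)) =
      H * (p - (1 - p) / m) := by
  ring

theorem sub_one_sub_div_eq_zero_of_eq_one_div_add_one {p m : ℝ} (hm : m ≠ 0)
    (hm₁ : m + 1 ≠ 0) (hp : p = 1 / (m + 1)) : p - (1 - p) / m = 0 := by
  subst hp
  field_simp
  ring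

theorem defender_mix_makes_attacker_indifferent_general
    (n : ℕ) (hn : 3 ≤ n) (k : ℕ)
    (H I : ℝ) (p : ℝ) (hp : p = 1 / ((n : ℝ) - 1)) :
    p * (H - I * k) + (1 - p) * (H * ((k : ℝ) - 1) / ((n : ℝ) - 2) - I * k) =
      p * (-(I * k)) + (1 - p) * (H * (k : ℝ) / ((n : ℝ) - 2) - I * k) := by
  have hn₃ : (3 : ℝ) ≤ n := by exact_mod_cast hn
  have hbalance : p - (1 - p) / ((n : ℝ) - 2) = 0 :=
    sub_one_sub_div_eq_zero_of_eq_one_div_add_one (by linarith) (by linarith)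
      (by rw [hp]; ring_nf)
  rw [← sub_eq_zero, attacker_payoff_direct_sub_indirect, hbalance, mul_zero]

/-- The defender's mixed strategy `p = 1/(n-1)` makes the attacker indifferent between
his two pure strategies: the attacker's expected payoff for playing `direct`
(namely `p(H - Ik) + (1-p)(H(k-1)/(n-2) - Ik)`) equals his expected payoff for playing
`indirect` (namely `p(-Ik) + (1-p)(Hk/(n-2) - Ik)`). -/
theorem defender_mix_makes_attacker_indifferent
    (n : ℕ) (hn : 3 ≤ n) (k : ℕ) (hk : 1 ≤ k) (hkn : k ≤ n - 2)
    (H I : ℝ) (hH : 0 < H) (p : ℝ) (hp : p = 1 / ((n : ℝ) - 1)) :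
    p * (H - I * k) + (1 - p) * (H * ((k : ℝ) - 1) / ((n : ℝ) - 2) - I * k) =
      p * (-(I * k)) + (1 - p) * (H * (k : ℝ) / ((n : ℝ) - 2) - I * k) :=
  defender_mix_makes_attacker_indifferent_general n hn k H I p hp
end

section
/- Let C : 2^E → ℝ be monotone and submodular with C(∅) = 0, and let S_k = {e_1, ..., e_k} be the greedy set after k steps. Then for every j < k, the marginal gains are non-increasing in expectation relative to the remaining optimum: C(S_{j+1}) − C(S_j) ≥ (OPT_k − C(S_j))/k, where OPT_k = max{C(S) : |S| ≤ k}. -/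
lemma greedy_aux {E : Type*} [Fintype E] [DecidableEq E]
    (C : Finset E → ℝ)
    (hmono : ∀ A B : Finset E, A ⊆ B → C A ≤ C B)
    (hsub : ∀ A B : Finset E, C (A ∪ B) + C (A ∩ B) ≤ C A + C B)
    (A : Finset E) (T : Finset E) :
    C (A ∪ T) ≤ C A + ∑ e ∈ T, (C (insert e A) - C A) := by
  induction T using Finset.induction_on with
  | empty => simp
  | insert _ _ he ih =>
    rename_i e T
    have h1 := hsub (insert e A) (A ∪ T)
    have h2 : A ⊆ (insert e A) ∩ (A ∪ T) :=
      Finset.subset_inter (Finset.subset_insert _ _) Finset.subset_union_left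
    have h3 : (insert e A) ∪ (A ∪ T) = A ∪ insert e T := by
      ext x; simp only [Finset.mem_union, Finset.mem_insert]; tauto
    have h4 := hmono _ _ h2
    rw [Finset.sum_insert he]
    have : C (A ∪ insert e T) ≤ C (insert e A) + C (A ∪ T) - C A := by
      rw [h3] at h1; linarith
    linarith

/-- Key inductive inequality of the Nemhauser–Wolsey–Fisher analysis: at each greedy step
`j < k`, the marginal gain is at least a `1/k` fraction of the remaining gap to the
optimum: `C(S_{j+1}) - C(S_j) ≥ (OPT_k - C(S_j)) / k`. -/
theorem greedy_step_gain {E : Type*} [Fintype E] [DecidableEq E]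
    (C : Finset E → ℝ)
    (hmono : ∀ A B : Finset E, A ⊆ B → C A ≤ C B)
    (hsub : ∀ A B : Finset E, C (A ∪ B) + C (A ∩ B) ≤ C A + C B)
    (hempty : C ∅ = 0)
    (k : ℕ) (hk : 1 ≤ k)
    (S : ℕ → Finset E)
    (hS0 : S 0 = ∅)
    (hgreedy : ∀ j, ∃ e : E, S (j + 1) = insert e (S j) ∧
      ∀ x : E, C (insert x (S j)) ≤ C (S (j + 1)))
    (OPT : ℝ)
    (hOPTmax : ∀ T : Finset E, T.card ≤ k → C T ≤ OPT)
    (hOPTach : ∃ T : Finset E, T.card ≤ k ∧ C T = OPT) :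
    ∀ j, j < k → (OPT - C (S j)) / k ≤ C (S (j + 1)) - C (S j) := by
  intro j hj
  obtain ⟨T, hTcard, hTopt⟩ := hOPTach
  obtain ⟨e, heS, hbest⟩ := hgreedy j
  set A := S j with hA
  set g := C (S (j + 1)) - C A with hg
  have hg0 : 0 ≤ g := by
    have : A ⊆ S (j + 1) := by rw [heS]; exact Finset.subset_insert _ _
    have := hmono _ _ this
    simp [hg]; linarith
  -- each marginal at most g
  have hsum : ∑ x ∈ T, (C (insert x A) - C A) ≤ (T.card : ℝ) * g := by
    have := Finset.sum_le_card_nsmul T (fun x => C (insert x A) - C A) g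
      (fun x _ => by have := hbest x; simp [hg]; linarith)
    simpa [nsmul_eq_mul] using this
  have hchain : OPT ≤ C A + (k : ℝ) * g := by
    have h1 : C T ≤ C (A ∪ T) := hmono _ _ (Finset.subset_union_right)
    have h2 := greedy_aux C hmono hsub A T
    have h3 : (T.card : ℝ) * g ≤ (k : ℝ) * g :=
      mul_le_mul_of_nonneg_right (by exact_mod_cast hTcard) hg0
    linarith [hTopt ▸ h1]
  have hkpos : (0 : ℝ) < k := by exact_mod_cast hk
  rw [div_le_iff₀ hkpos]
  have hgeq : C (S (j+1)) - C A = g := rfl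
  nlinarith [hchain]
end

section
/- From the inequality C(S_{j+1}) − C(S_j) ≥ (OPT_k − C(S_j))/k for all 0 ≤ j < k (with C(S_0) = 0), it follows by induction that OPT_k − C(S_k) ≤ (1 − 1/k)^k · OPT_k, i.e., C(S_k) ≥ (1 − (1 − 1/k)^k)·OPT_k. -/
/-! Each greedy step closes at least a `1/k` fraction of the remaining gap `OPT - a j`, so the gap
contracts by the factor `1 - 1/k` per step, and `k` steps leave at most `(1 - 1/k)^k · OPT`. -/

lemma sub_le_one_sub_one_div_mul_of_div_le {c OPT x y : ℝ} (h : (OPT - x) / c ≤ y - x) :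
    OPT - y ≤ (1 - 1 / c) * (OPT - x) := by
  linarith [show (1 - 1 / c) * (OPT - x) = (OPT - x) - (OPT - x) / c by ring]

lemma one_sub_one_div_natCast_nonneg (k : ℕ) : 0 ≤ 1 - 1 / (k : ℝ) := by
  rw [sub_nonneg, one_div]
  exact Nat.cast_inv_le_one k

theorem greedy_induction_arithmetic_general
    (k : ℕ) (a : ℕ → ℝ) (OPT : ℝ)
    (ha0 : a 0 = 0)
    (hstep : ∀ j, j < k → (OPT - a j) / k ≤ a (j + 1) - a j) :
    OPT - a k ≤ (1 - 1 / (k : ℝ)) ^ k * OPT ∧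
    (1 - (1 - 1 / (k : ℝ)) ^ k) * OPT ≤ a k := by
  have hgap : OPT - a k ≤ (1 - 1 / (k : ℝ)) ^ k * OPT := by
    simpa [ha0] using le_geom (u := fun j ↦ OPT - a j) (one_sub_one_div_natCast_nonneg k) k
      fun j hj ↦ sub_le_one_sub_one_div_mul_of_div_le (hstep j hj)
  exact ⟨hgap, by linarith⟩

/-- Arithmetic induction completing the greedy analysis: if `a 0 = 0` and
`a (j+1) - a j ≥ (OPT - a j)/k` for all `j < k`, then
`OPT - a k ≤ (1 - 1/k)^k · OPT`, i.e. `a k ≥ (1 - (1 - 1/k)^k) · OPT`. -/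
theorem greedy_induction_arithmetic
    (k : ℕ) (hk : 1 ≤ k) (a : ℕ → ℝ) (OPT : ℝ)
    (hOPT : 0 ≤ OPT) (ha0 : a 0 = 0)
    (hstep : ∀ j, j < k → (OPT - a j) / k ≤ a (j + 1) - a j) :
    OPT - a k ≤ (1 - 1 / (k : ℝ)) ^ k * OPT ∧
    (1 - (1 - 1 / (k : ℝ)) ^ k) * OPT ≤ a k :=
  greedy_induction_arithmetic_general k a OPT ha0 hstep
end
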